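/- arXiv:1008.2425 — 5 statements merged into one kernel-verified Lean document; each statement's English description precedes it below -/
import Mathlib

section
/- For every n ≥ 2, the identity (x₁²x₂²⋯xₙ²)² = (x₁²x₂²⋯xₙ²)³ holds in the 6-element semigroup AC₂. -/
/-- The 6-element set `{a, b, ab, ba, 0, c}` underlying the semigroup `AC₂`
(`z` denotes the element `0` of `A₂`). -/
inductive AC2 : Type
  | a | b | ab | ba | z | c
  deriving DecidableEq

instance : Fintype AC2 :=
  ⟨⟨(([.a, .b, .ab, .ba, .z, .c] : List AC2) : Multiset AC2), by decide⟩,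
    fun x => by cases x <;> decide⟩

/-- The multiplication on `AC₂`, extending that of
`A₂ = ⟨a,b ∣ a² = aba = a, bab = b, b² = 0⟩` by `c² = 0`, `xc = cx = c` for `x ∈ A₂`. -/
def AC2.mul : AC2 → AC2 → AC2
  | .c, .c => .z
  | .c, _ => .c
  | _, .c => .c
  | .z, _ => .z
  | _, .z => .z
  | .a, .a => .a
  | .a, .b => .ab
  | .a, .ab => .ab
  | .a, .ba => .a
  | .b, .a => .ba
  | .b, .b => .z
  | .b, .ab => .b
  | .b, .ba => .z
  | .ab, .a => .a
  | .ab, .b => .z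
  | .ab, .ab => .ab
  | .ab, .ba => .z
  | .ba, .a => .ba
  | .ba, .b => .b
  | .ba, .ab => .b
  | .ba, .ba => .ba

instance : Mul AC2 := ⟨AC2.mul⟩

instance : Semigroup AC2 where
  mul_assoc := by decide

/-- The product `x₁² x₂² ⋯ xₙ²` of the squares of `n = m + 2 ≥ 2` elements. -/
def sqProd {S : Type*} [Mul S] {m : ℕ} (f : Fin (m + 2) → S) : S :=
  List.foldl (· * ·) (f 0 * f 0) (List.ofFn fun i : Fin (m + 1) => f i.succ * f i.succ)

/-!
Every element of `AC₂` other than `c` lies in `A₂`, which is a subsemigroup, and every square lies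
in `A₂` (since `c² = 0`). Hence `x₁² ⋯ xₙ²` lies in `A₂`, where `x² = x³` holds by inspection.
The squares matter: `c² = 0` but `c³ = c`.
-/

theorem Subsemigroup.foldl_mul_mem {S : Type*} [Mul S] (T : Subsemigroup S) {x : S} {l : List S}
    (hx : x ∈ T) (hl : ∀ y ∈ l, y ∈ T) : l.foldl (· * ·) x ∈ T := by
  induction l generalizing x with
  | nil => exact hx
  | cons y l ih =>
    exact ih (T.mul_mem hx (hl y List.mem_cons_self)) fun w hw => hl w (List.mem_cons_of_mem y hw)

theorem sqProd_mem {S : Type*} [Mul S] (T : Subsemigroup S) (hsq : ∀ x : S, x * x ∈ T) {m : ℕ}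
    (f : Fin (m + 2) → S) : sqProd f ∈ T :=
  T.foldl_mul_mem (hsq _) fun _ hy => by
    obtain ⟨i, rfl⟩ := List.mem_ofFn.mp hy
    exact hsq _

namespace AC2

def A2 : Subsemigroup AC2 where
  carrier := {x | x ≠ c}
  mul_mem' := by
    intro x y
    revert x y
    decide

theorem mem_A2 {x : AC2} : x ∈ A2 ↔ x ≠ c := Iff.rfl

theorem mul_self_mem_A2 (x : AC2) : x * x ∈ A2 := by
  rw [mem_A2]
  revert x
  decide

theorem mul_self_mul_eq_mul_self_of_mem_A2 {x : AC2} (hx : x ∈ A2) : x * x * x = x * x := by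
  rw [mem_A2] at hx
  revert x
  decide

end AC2

/-- For every `n ≥ 2`, the identity `(x₁²x₂²⋯xₙ²)² = (x₁²x₂²⋯xₙ²)³` holds
in the 6-element semigroup `AC₂`. -/
theorem AC2_sqProd (m : ℕ) (f : Fin (m + 2) → AC2) :
    sqProd f * sqProd f = sqProd f * sqProd f * sqProd f :=
  (AC2.mul_self_mul_eq_mul_self_of_mem_A2 (sqProd_mem AC2.A2 AC2.mul_self_mem_A2 f)).symm
end

section
/- If a semigroup S satisfies the identities (x₁²x₂²⋯xₙ²)² = (x₁²x₂²⋯xₙ²)³ for all n ≥ 2, then the subsemigroup of S generated by all idempotents of S is combinatorial, i.e., every subgroup contained in it is a singleton. -/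
/-- A subset `G` of a semigroup is a subgroup if it is nonempty, closed under
multiplication, and forms a group under the induced operation. -/
def IsSubgroupSet {S : Type*} [Mul S] (G : Set S) : Prop :=
  G.Nonempty ∧ (∀ x ∈ G, ∀ y ∈ G, x * y ∈ G) ∧
    ∃ e ∈ G, (∀ g ∈ G, g * e = g ∧ e * g = g) ∧ ∀ g ∈ G, ∃ h ∈ G, g * h = e ∧ h * g = e

/-!
An element of the subsemigroup generated by the idempotents is a product `e₁ ⋯ eₙ` of
idempotents; repeating `e₁` we may assume `n ≥ 2`, and then it equals `e₁² ⋯ eₙ²`, so the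
identity gives `x² = x³`. In a group, `x² = x³` forces `x` to be the identity.
-/

section
variable {S : Type*} [Semigroup S]

theorem sqProd_of_forall_isIdempotentElem {m : ℕ} {f : Fin (m + 2) → S}
    (hf : ∀ i, IsIdempotentElem (f i)) :
    sqProd f = (List.ofFn fun i : Fin (m + 1) => f i.succ).foldl (· * ·) (f 0) := by
  simp only [sqProd, (hf _).eq]

theorem Subsemigroup.exists_foldl_eq_of_mem_closure {s : Set S} {x : S}
    (hx : x ∈ Subsemigroup.closure s) :
    ∃ a ∈ s, ∃ l : List S, (∀ y ∈ l, y ∈ s) ∧ l.foldl (· * ·) a = x := by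
  have : Subsemigroup.closure s ≤ (FreeSemigroup.lift ((↑) : s → S)).srange :=
    Subsemigroup.closure_le.2 fun y hy => ⟨FreeSemigroup.of ⟨y, hy⟩, rfl⟩
  obtain ⟨⟨a, l⟩, rfl⟩ := this hx
  refine ⟨a, a.2, l.map (↑), fun y hy => ?_, by simp [FreeSemigroup.lift_mk_eq_foldl]⟩
  obtain ⟨b, -, rfl⟩ := List.mem_map.1 hy
  exact b.2

theorem exists_sqProd_eq_of_mem_closure_idempotents {x : S}
    (hx : x ∈ Subsemigroup.closure {e : S | IsIdempotentElem e}) :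
    ∃ (m : ℕ) (f : Fin (m + 2) → S), sqProd f = x := by
  obtain ⟨a, ha, l, hl, rfl⟩ := Subsemigroup.exists_foldl_eq_of_mem_closure hx
  refine ⟨l.length, Fin.cons a (Fin.cons a l.get), ?_⟩
  have hf : ∀ i, IsIdempotentElem ((Fin.cons a (Fin.cons a l.get) : Fin (l.length + 2) → S) i) :=
    Fin.cases ha (Fin.cases ha fun i => hl _ (l.get_mem i))
  rw [sqProd_of_forall_isIdempotentElem hf]
  simp [List.ofFn_succ, ha.eq]

theorem eq_of_mul_self_eq_mul_self_mul_self {e g k : S} (hge : g * e = g) (hgk : g * k = e)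
    (h : g * g = g * g * g) : g = e := by
  have hkk : g * g * (k * k) = e := by
    rw [mul_assoc, ← mul_assoc g k, hgk, ← mul_assoc, hge, hgk]
  calc g = g * e := hge.symm
    _ = g * g * g * (k * k) := by rw [← hkk]; simp only [mul_assoc]
    _ = e := by rw [← h, hkk]

end

/-- If a semigroup `S` satisfies the identities `(x₁²x₂²⋯xₙ²)² = (x₁²x₂²⋯xₙ²)³` for all
`n ≥ 2`, then the subsemigroup of `S` generated by all idempotents is combinatorial:
every subgroup contained in it is a singleton. -/
theorem idempotent_subsemigroup_combinatorial {S : Type*} [Semigroup S]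
    (h : ∀ (m : ℕ) (f : Fin (m + 2) → S),
      sqProd f * sqProd f = sqProd f * sqProd f * sqProd f)
    (G : Set S) (hG : IsSubgroupSet G)
    (hsub : G ⊆ (Subsemigroup.closure {e : S | e * e = e} : Subsemigroup S)) :
    G.Subsingleton := by
  obtain ⟨-, -, e, -, hid, hinv⟩ := hG
  have eq_e : ∀ g ∈ G, g = e := fun g hg => by
    obtain ⟨k, -, hgk, -⟩ := hinv g hg
    obtain ⟨m, f, rfl⟩ := exists_sqProd_eq_of_mem_closure_idempotents (hsub hg)
    exact eq_of_mul_self_eq_mul_self_mul_self (hid _ hg).1 hgk (h m f)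
  intro a ha b hb
  rw [eq_e a ha, eq_e b hb]
end

section
/- Let S be a semigroup satisfying the identities x² = x⁴, xyx = (xy)³x, and xyxzx = xzxyx. If a word w of length at least 2 begins and ends with the same variable, then every value of w in S is a regular element of S (i.e., if s is a value of w under some substitution, there exists s' ∈ S with s s' s = s). -/
/-- The value of the word `x :: w'` in `S` under the substitution `σ`. -/
def evalWord {V S : Type*} [Mul S] (σ : V → S) (x : V) (w' : List V) : S :=
  List.foldl (fun t v => t * σ v) (σ x) w'

lemma foldl_mul_pull {S : Type*} [Semigroup S] {V : Type*} (σ : V → S)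
    (l : List V) : ∀ a b : S,
    List.foldl (fun t v => t * σ v) (a * b) l = a * List.foldl (fun t v => t * σ v) b l := by
  induction l with
  | nil => intro a b; rfl
  | cons v vs ih => intro a b; simp only [List.foldl_cons, mul_assoc]; exact ih a (b * σ v)

/-- Let `S` satisfy the identities `x² = x⁴`, `xyx = (xy)³x` and `xyxzx = xzxyx`. If a
word `x :: w'` of length at least 2 begins and ends with the same variable `x`
(i.e. `w'` is nonempty with last letter `x`), then every value of this word in `S`
is a regular element. -/
theorem value_of_word_regular {S : Type*} [Semigroup S]
    (h1 : ∀ x : S, x * x = x * x * x * x)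
    (h2 : ∀ x y : S, x * y * x = (x * y) * (x * y) * (x * y) * x)
    (h3 : ∀ x y z : S, x * y * x * z * x = x * z * x * y * x)
    {V : Type*} (x : V) (w' : List V) (hw : w'.getLast? = some x) (σ : V → S) :
    ∃ s' : S, evalWord σ x w' * s' * evalWord σ x w' = evalWord σ x w' := by
  obtain ⟨u, rfl⟩ : ∃ u, w' = u ++ [x] := by
    rcases List.eq_nil_or_concat w' with rfl | ⟨u, y, rfl⟩
    · simp at hw
    · simp at hw
      exact ⟨u, by rw [hw, List.concat_eq_append]⟩
  match u with
  | [] =>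
    refine ⟨σ x * σ x, ?_⟩
    show (σ x * σ x) * (σ x * σ x) * (σ x * σ x) = σ x * σ x
    have hid : (σ x * σ x) * (σ x * σ x) = σ x * σ x := by
      rw [← mul_assoc, ← h1]
    rw [hid, hid]
  | v :: vs =>
    set m := List.foldl (fun t v => t * σ v) (σ v) vs with hm
    have hev : evalWord σ x ((v :: vs) ++ [x]) = σ x * m * σ x := by
      simp only [evalWord, List.foldl_append, List.foldl_cons, List.foldl_nil]
      rw [foldl_mul_pull σ vs (σ x) (σ v)]
    refine ⟨m, ?_⟩
    rw [hev]
    conv_rhs => rw [h2 (σ x) m]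
    simp [mul_assoc]
end

section
/- In any semigroup satisfying the identities xyx = (xy)³x and xyxzx = xzxyx, for all elements x, y, w₁, w₂, w₃ one has x w₁ y w₂ x w₃ y = (x w₁ y w₂ x w₃ y)(w₂ x w₁ y w₂ x w₃ y w₂)(x w₁ y w₂ x w₃ y). In particular, every element of the form x w₁ y w₂ x w₃ y is regular. -/
/-- In any semigroup satisfying `xyx = (xy)³x` and `xyxzx = xzxyx`, every element of
the form `x w₁ y w₂ x w₃ y` satisfies
`x w₁ y w₂ x w₃ y = (x w₁ y w₂ x w₃ y)(w₂ x w₁ y w₂ x w₃ y w₂)(x w₁ y w₂ x w₃ y)`;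
in particular, it is regular. -/
theorem key_regularity_computation {S : Type*} [Semigroup S]
    (h2 : ∀ x y : S, x * y * x = (x * y) * (x * y) * (x * y) * x)
    (h3 : ∀ x y z : S, x * y * x * z * x = x * z * x * y * x)
    (x y w₁ w₂ w₃ : S) :
    x * w₁ * y * w₂ * x * w₃ * y =
      (x * w₁ * y * w₂ * x * w₃ * y) * (w₂ * x * w₁ * y * w₂ * x * w₃ * y * w₂) *
        (x * w₁ * y * w₂ * x * w₃ * y) := by
  calc x * w₁ * y * w₂ * x * w₃ * y
      = x * (w₁ * y * w₂) * x * (w₃ * y) := by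
        simp only [mul_assoc]
    _ = x * w₁ * y * w₂ * x * w₁ * y * w₂ * x * w₁ * (y * (w₂ * x * w₃) * y) := by
        rw [h2 x (w₁ * y * w₂)]; simp only [mul_assoc]
    _ = x * (w₁ * y * w₂) * x *
          (w₁ * y * w₂ * x * w₁ * y * w₂ * x * w₃ * y * w₂ * x * w₃ * y * w₂) * x *
          (w₃ * y) := by
        rw [h2 y (w₂ * x * w₃)]; simp only [mul_assoc]
    _ = x * (w₁ * y * w₂) * x * (w₁ * y * w₂ * x * w₃ * y * w₂) * x *
          (w₃ * y * w₂ * x * w₁ * y * w₂ * x * w₃ * y) := by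
        rw [h3 x (w₁ * y * w₂)
          (w₁ * y * w₂ * x * w₁ * y * w₂ * x * w₃ * y * w₂ * x * w₃ * y * w₂)]
        simp only [mul_assoc]
    _ = (x * w₁ * y * w₂ * x * w₃ * y) * (w₂ * x * w₁ * y * w₂ * x * w₃ * y * w₂) *
          (x * w₁ * y * w₂ * x * w₃ * y) := by
        rw [h3 x (w₁ * y * w₂) (w₁ * y * w₂ * x * w₃ * y * w₂)]
        simp only [mul_assoc]
end

section
/- A word w of length at least 2 is connected (its graph G(w) is strongly connected) if and only if w cannot be decomposed as w = w'w'' with nonempty words w', w'' whose sets of variables are disjoint. -/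
/-- The edge relation of the graph `G(w)` of a word `w`: there is an edge `x → y` iff
some occurrence of `x` in `w` is immediately followed by an occurrence of `y`. -/
def WordEdge {V : Type*} (w : List V) (x y : V) : Prop :=
  ∃ l₁ l₂ : List V, w = l₁ ++ x :: y :: l₂

/-- A word `w` is connected if its graph `G(w)` is strongly connected, i.e. any vertex
(variable occurring in `w`) is reachable from any other along directed edges. -/
def IsConnectedWord {V : Type*} (w : List V) : Prop :=
  ∀ x ∈ w, ∀ y ∈ w, Relation.ReflTransGen (WordEdge w) x y

private lemma reach_chain {V : Type*} (w : List V) :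
    ∀ (l₁ : List V) (x : V) (l₂ : List V), w = l₁ ++ x :: l₂ → ∀ y ∈ x :: l₂,
      Relation.ReflTransGen (WordEdge w) x y := by
  intro l₁ x l₂
  induction l₂ generalizing l₁ x with
  | nil =>
    intro hw y hy
    simp only [List.mem_singleton] at hy
    subst hy; exact .refl
  | cons z l₂ ih =>
    intro hw y hy
    rcases List.mem_cons.1 hy with rfl | hy
    · exact .refl
    · have edge : WordEdge w x z := ⟨l₁, l₂, hw⟩
      have h2 : Relation.ReflTransGen (WordEdge w) z y :=
        ih (l₁ ++ [x]) z (by simp [hw]) y hy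
      exact .trans (.single edge) h2

private lemma reach_index {V : Type*} (w : List V) {k m : ℕ} (hkm : k ≤ m)
    (hm : m < w.length) :
    Relation.ReflTransGen (WordEdge w) (w[k]'(lt_of_le_of_lt hkm hm)) (w[m]'hm) := by
  have hk : k < w.length := lt_of_le_of_lt hkm hm
  have hsplit : w = w.take k ++ w[k] :: w.drop (k + 1) := by
    rw [← List.drop_eq_getElem_cons hk, List.take_append_drop]
  apply reach_chain w _ _ _ hsplit
  rw [← List.drop_eq_getElem_cons hk]
  have hmk : m - k < (w.drop k).length := by
    simp only [List.length_drop]; omega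
  have heq : (w.drop k)[m - k]'hmk = w[m]'hm := by
    rw [List.getElem_drop]
    congr 1
    omega
  rw [← heq]
  exact List.getElem_mem _

private lemma closed_suffix {V : Type*} {w w₁ w₂ : List V} (hw : w = w₁ ++ w₂)
    (hdisj : ∀ v : V, ¬(v ∈ w₁ ∧ v ∈ w₂)) {x y : V} (hx : x ∈ w₂)
    (hxy : WordEdge w x y) : y ∈ w₂ := by
  obtain ⟨l₁, l₂, hl⟩ := hxy
  rw [hw] at hl
  rcases List.append_eq_append_iff.1 hl with ⟨a, ha1, ha2⟩ | ⟨c, hc1, hc2⟩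
  · rw [ha2]; simp
  · cases c with
    | nil =>
      simp only [List.nil_append] at hc2
      rw [← hc2]; simp
    | cons h t =>
      have hxh : h = x := by
        have := hc2
        simp only [List.cons_append, List.cons.injEq] at this
        exact this.1.symm
      exact absurd ⟨by rw [hc1]; subst hxh; simp, hx⟩ (hdisj x)

/-- A word of length at least 2 is connected (its graph is strongly connected) iff it
cannot be decomposed as a concatenation of two nonempty words with disjoint sets of
variables. -/
theorem connected_iff_no_disjoint_decomposition {V : Type*} (w : List V)
    (hw : 2 ≤ w.length) :
    IsConnectedWord w ↔
      ¬∃ w₁ w₂ : List V, w₁ ≠ [] ∧ w₂ ≠ [] ∧ w = w₁ ++ w₂ ∧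
        ∀ v : V, ¬(v ∈ w₁ ∧ v ∈ w₂) := by
  constructor
  · rintro hconn ⟨w₁, w₂, h1, h2, hdec, hdisj⟩
    obtain ⟨a, ha⟩ := List.exists_mem_of_ne_nil w₁ h1
    obtain ⟨b, hb⟩ := List.exists_mem_of_ne_nil w₂ h2
    have hclosed : ∀ {x y : V}, x ∈ w₂ →
        Relation.ReflTransGen (WordEdge w) x y → y ∈ w₂ := by
      intro x y hx h
      induction h with
      | refl => exact hx
      | tail _ he ih => exact closed_suffix hdec hdisj ih he
    have hpath : Relation.ReflTransGen (WordEdge w) b a :=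
      hconn b (by rw [hdec]; exact List.mem_append_right _ hb)
        a (by rw [hdec]; exact List.mem_append_left _ ha)
    exact hdisj a ⟨ha, hclosed hb hpath⟩
  · intro hnd
    classical
    have h0 : 0 < w.length := by omega
    -- key: every letter reaches w[0]
    have key : ∀ i (hi : i < w.length),
        Relation.ReflTransGen (WordEdge w) (w[i]'hi) (w[0]'h0) := by
      by_contra hbad
      push_neg at hbad
      obtain ⟨i, hi, hni⟩ := hbad
      have hP : ∃ n, ∃ h : n < w.length,
          ¬ Relation.ReflTransGen (WordEdge w) (w[n]'h) (w[0]'h0) := ⟨i, hi, hni⟩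
      obtain ⟨hklt, hknr⟩ := Nat.find_spec hP
      have hk1 : 1 ≤ Nat.find hP := by
        rcases Nat.eq_zero_or_pos (Nat.find hP) with h | h
        · exfalso
          simp only [h] at hknr
          exact hknr Relation.ReflTransGen.refl
        · exact h
      have hmin : ∀ j, j < Nat.find hP → ∀ h : j < w.length,
          Relation.ReflTransGen (WordEdge w) (w[j]'h) (w[0]'h0) := by
        intro j hj h
        by_contra hc
        exact Nat.find_min hP hj ⟨h, hc⟩
      apply hnd
      refine ⟨w.take (Nat.find hP), w.drop (Nat.find hP), ?_, ?_,
        (List.take_append_drop (Nat.find hP) w).symm, ?_⟩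
      · intro h
        have := congrArg List.length h
        simp only [List.length_take, List.length_nil] at this
        omega
      · intro h
        have := congrArg List.length h
        simp only [List.length_drop, List.length_nil] at this
        omega
      · rintro v ⟨hv1, hv2⟩
        obtain ⟨i1, hi1, hvi1⟩ := List.mem_iff_getElem.1 hv1
        obtain ⟨i2, hi2, hvi2⟩ := List.mem_iff_getElem.1 hv2
        simp only [List.length_take] at hi1
        simp only [List.length_drop] at hi2
        have hi1w : i1 < w.length := by omega
        have e1 : w[i1]'hi1w = v := by rw [← hvi1, List.getElem_take]
        have e2 : w[Nat.find hP + i2]'(by omega) = v := by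
          rw [← hvi2, List.getElem_drop]
        have r1 : Relation.ReflTransGen (WordEdge w) v (w[0]'h0) := by
          rw [← e1]; exact hmin i1 (by omega) hi1w
        have r2 : Relation.ReflTransGen (WordEdge w) (w[Nat.find hP]'hklt) v := by
          rw [← e2]; exact reach_index w (Nat.le_add_right _ i2) (by omega)
        exact hknr (r2.trans r1)
    intro x hx y hy
    obtain ⟨i, hi, hxi⟩ := List.mem_iff_getElem.1 hx
    obtain ⟨j, hj, hyj⟩ := List.mem_iff_getElem.1 hy
    have r1 : Relation.ReflTransGen (WordEdge w) x (w[0]'h0) := by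
      rw [← hxi]; exact key i hi
    have r2 : Relation.ReflTransGen (WordEdge w) (w[0]'h0) y := by
      rw [← hyj]; exact reach_index w (Nat.zero_le j) hj
    exact r1.trans r2
end
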